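/- For probability vectors p, q ∈ ℝⁿ with positive entries, if |pᵢ - qᵢ| ≤ ε for all i with ε ≤ 1/(2e) and n·ε ≤ 1/2, then |H(p) - H(q)| ≤ n·ε·(log n - log(n·ε)) + n·ε, where H denotes Shannon entropy. (A continuity estimate for entropy in the style of the persistent entropy stability theorem.) -/

import Mathlib

/-!
Write `f t = t log t`. For `0 < x ≤ y ≤ 1` with `y - x ≤ ε ≤ e⁻¹`,
`f y - f x = (y - x) log y + x log (y / x)`. The second term lies in `[0, y - x] ⊆ [0, ε]`,
and the first in `[ε log ε, 0]`: when `ε ≤ y` because `log ε ≤ log y ≤ 0`, and when `y < ε`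
because `(y - x) log y ≥ f y ≥ f ε`, `f` being antitone on `[0, e⁻¹]`. Hence each coordinate
changes `f` by at most `-ε log ε + ε`, and summing over the `n` coordinates gives
`n (-ε log ε + ε)`, which is the claimed bound since `log n - log (n ε) = -log ε`.
-/

open Real Set

namespace Real

lemma mul_log_antitoneOn : AntitoneOn (fun x => x * log x) (Icc 0 (exp (-1))) := by
  refine antitoneOn_of_deriv_nonpos (convex_Icc _ _) continuous_mul_log.continuousOn
    (differentiableOn_mul_log.mono ?_) ?_ <;> rw [interior_Icc]
  · exact fun x hx => hx.1.ne'
  intro x hx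
  have hlog : log x ≤ -1 := by
    simpa using log_le_log hx.1 hx.2.le
  rw [deriv_mul_log hx.1.ne']
  linarith

lemma mul_log_le_sub_mul_log_of_sub_le {x y ε : ℝ} (hx : 0 < x) (hxy : x ≤ y) (hy : y ≤ 1)
    (hyx : y - x ≤ ε) (hε : 0 < ε) (hεe : ε ≤ exp (-1)) :
    ε * log ε ≤ (y - x) * log y := by
  have hy0 : 0 < y := hx.trans_le hxy
  have hlogy : log y ≤ 0 := log_nonpos hy0.le hy
  rcases le_or_gt ε y with hεy | hyε
  · calc ε * log ε ≤ ε * log y := mul_le_mul_of_nonneg_left (log_le_log hε hεy) hε.le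
      _ ≤ (y - x) * log y := mul_le_mul_of_nonpos_right hyx hlogy
  · calc ε * log ε ≤ y * log y :=
          mul_log_antitoneOn ⟨hy0.le, hyε.le.trans hεe⟩ ⟨hε.le, hεe⟩ hyε.le
      _ ≤ (y - x) * log y := mul_le_mul_of_nonpos_right (by linarith) hlogy

lemma mul_log_div_le_sub {x y : ℝ} (hx : 0 < x) (hy : 0 < y) : x * log (y / x) ≤ y - x :=
  calc x * log (y / x) ≤ x * (y / x - 1) :=
        mul_le_mul_of_nonneg_left (log_le_sub_one_of_pos (by positivity)) hx.le
    _ = y - x := by field_simp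

lemma abs_mul_log_sub_mul_log_le_of_le {x y ε : ℝ} (hx : 0 < x) (hxy : x ≤ y) (hy : y ≤ 1)
    (hyx : y - x ≤ ε) (hε : 0 < ε) (hεe : ε ≤ exp (-1)) :
    |y * log y - x * log x| ≤ -ε * log ε + ε := by
  have hy0 : 0 < y := hx.trans_le hxy
  have hdecomp : y * log y - x * log x = (y - x) * log y + x * log (y / x) := by
    rw [log_div hy0.ne' hx.ne']
    ring
  have hfirst_nonpos : (y - x) * log y ≤ 0 :=
    mul_nonpos_of_nonneg_of_nonpos (by linarith) (log_nonpos hy0.le hy)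
  have hfirst_ge := mul_log_le_sub_mul_log_of_sub_le hx hxy hy hyx hε hεe
  have hsecond_nonneg : 0 ≤ x * log (y / x) :=
    mul_nonneg hx.le (log_nonneg ((one_le_div hx).2 hxy))
  have hsecond_le := mul_log_div_le_sub hx hy0
  rw [hdecomp, abs_le]
  constructor <;> linarith

lemma abs_mul_log_sub_mul_log_le {x y ε : ℝ} (hx : 0 < x) (hy : 0 < y) (hx1 : x ≤ 1)
    (hy1 : y ≤ 1) (hxy : |x - y| ≤ ε) (hε : 0 < ε) (hεe : ε ≤ exp (-1)) :
    |x * log x - y * log y| ≤ -ε * log ε + ε := by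
  rw [abs_le] at hxy
  rcases le_total x y with h | h
  · rw [abs_sub_comm]
    exact abs_mul_log_sub_mul_log_le_of_le hx h hy1 (by linarith) hε hεe
  · exact abs_mul_log_sub_mul_log_le_of_le hy h hx1 (by linarith) hε hεe

end Real

lemma Finset.abs_sum_mul_log_sub_sum_mul_log_le {ι : Type*} (s : Finset ι) {p q : ι → ℝ}
    {ε : ℝ} (hp : ∀ i ∈ s, 0 < p i) (hq : ∀ i ∈ s, 0 < q i) (hp1 : ∀ i ∈ s, p i ≤ 1)
    (hq1 : ∀ i ∈ s, q i ≤ 1) (hclose : ∀ i ∈ s, |p i - q i| ≤ ε) (hε : 0 < ε)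
    (hεe : ε ≤ exp (-1)) :
    |∑ i ∈ s, p i * log (p i) - ∑ i ∈ s, q i * log (q i)| ≤ s.card * (-ε * log ε + ε) := by
  rw [← Finset.sum_sub_distrib]
  calc |∑ i ∈ s, (p i * log (p i) - q i * log (q i))|
      ≤ ∑ i ∈ s, |p i * log (p i) - q i * log (q i)| := Finset.abs_sum_le_sum_abs _ _
    _ ≤ ∑ _i ∈ s, (-ε * log ε + ε) := Finset.sum_le_sum fun i hi =>
        abs_mul_log_sub_mul_log_le (hp i hi) (hq i hi) (hp1 i hi) (hq1 i hi) (hclose i hi) hε hεe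
    _ = s.card * (-ε * log ε + ε) := by rw [Finset.sum_const, nsmul_eq_mul]

lemma le_one_of_sum_eq_one {ι : Type*} [Fintype ι] {p : ι → ℝ} (hp : ∀ i, 0 ≤ p i)
    (hps : ∑ i, p i = 1) (i : ι) : p i ≤ 1 :=
  hps ▸ Finset.single_le_sum (fun j _ => hp j) (Finset.mem_univ i)

theorem entropy_continuity_general (n : ℕ) (p q : Fin n → ℝ) (ε : ℝ) (hε : 0 < ε)
    (hp : ∀ i, 0 < p i) (hq : ∀ i, 0 < q i)
    (hps : ∑ i, p i = 1) (hqs : ∑ i, q i = 1)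
    (hclose : ∀ i, |p i - q i| ≤ ε)
    (hε1 : ε ≤ 1 / (2 * Real.exp 1)) :
    |(-(∑ i, p i * Real.log (p i))) - (-(∑ i, q i * Real.log (q i)))| ≤
      (n : ℝ) * ε * (Real.log n - Real.log ((n : ℝ) * ε)) + (n : ℝ) * ε := by
  have hn : (n : ℝ) ≠ 0 := Nat.cast_ne_zero.2 (by rintro rfl; simp at hps)
  have hεe : ε ≤ exp (-1) := by
    rw [exp_neg, ← one_div]
    exact hε1.trans (one_div_le_one_div_of_le (exp_pos 1) (by linarith [exp_pos 1]))
  have hbound := Finset.univ.abs_sum_mul_log_sub_sum_mul_log_le (fun i _ => hp i)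
    (fun i _ => hq i) (fun i _ => le_one_of_sum_eq_one (fun j => (hp j).le) hps i)
    (fun i _ => le_one_of_sum_eq_one (fun j => (hq j).le) hqs i) (fun i _ => hclose i) hε hεe
  rw [Finset.card_univ, Fintype.card_fin] at hbound
  rw [neg_sub_neg, abs_sub_comm, log_mul hn hε.ne']
  linarith

/-- A continuity estimate for Shannon entropy: if two positive probability
vectors are `ε`-close entrywise with `ε ≤ 1/(2e)` and `n ε ≤ 1/2`, then their
entropies differ by at most `n ε (log n - log (n ε)) + n ε`. -/
theorem entropy_continuity (n : ℕ) (p q : Fin n → ℝ) (ε : ℝ) (hε : 0 < ε)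
    (hp : ∀ i, 0 < p i) (hq : ∀ i, 0 < q i)
    (hps : ∑ i, p i = 1) (hqs : ∑ i, q i = 1)
    (hclose : ∀ i, |p i - q i| ≤ ε)
    (hε1 : ε ≤ 1 / (2 * Real.exp 1)) (hε2 : (n : ℝ) * ε ≤ 1 / 2) :
    |(-(∑ i, p i * Real.log (p i))) - (-(∑ i, q i * Real.log (q i)))| ≤
      (n : ℝ) * ε * (Real.log n - Real.log ((n : ℝ) * ε)) + (n : ℝ) * ε :=
  entropy_continuity_general n p q ε hε hp hq hps hqs hclose hε1
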